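/- Let A be a Hilbert algebra and n ∈ ℕ. Then A has depth ≤ n (the poset of meet irreducible implicative filters of A contains no chain of length n+1) if and only if A satisfies the identity dₙ(x₀, …, xₙ) ≈ 1. -/
import Mathlib


structure HilbertAlgebra (A : Type*) where
  imp : A → A → A
  one : A
  one_eq : ∀ a : A, imp a a = one
  K : ∀ a b : A, imp a (imp b a) = one
  S : ∀ a b c : A, imp (imp a (imp b c)) (imp (imp a b) (imp a c)) = one
  antisymm : ∀ a b : A, imp a b = one → imp b a = one → a = b

namespace HilbertAlgebra

variable {A : Type*} (H : HilbertAlgebra A)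

/-- The order of a Hilbert algebra: `a ≤ b` iff `a → b = 1`. -/
def le (a b : A) : Prop := H.imp a b = H.one

/-- Implicative filters: contain `1` and are closed under modus ponens. -/
def IsFilter (F : Set A) : Prop :=
  H.one ∈ F ∧ ∀ a b : A, a ∈ F → H.imp a b ∈ F → b ∈ F

/-- The implicative filter generated by a set `X`. -/
def Fg (X : Set A) : Set A := ⋂₀ {F : Set A | H.IsFilter F ∧ X ⊆ F}

/-- Meet irreducible implicative filters. -/
def MeetIrred (F : Set A) : Prop :=
  H.IsFilter F ∧ F ≠ Set.univ ∧
    ∀ G K : Set A, H.IsFilter G → H.IsFilter K → F ⊂ G → F ⊂ K → F ≠ G ∩ K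

/-- The terms `dₙ`. -/
def d : (n : ℕ) → (Fin (n + 1) → A) → A
  | 0, x => x 0
  | n + 1, x =>
    H.imp
      (H.imp (H.imp (x (Fin.last (n + 1))) (d n fun i => x i.castSucc))
        (x (Fin.last (n + 1))))
      (x (Fin.last (n + 1)))

end HilbertAlgebra

namespace HilbertAlgebra

variable {A : Type*} (H : HilbertAlgebra A)

/-! ### Basic equational lemmas -/

lemma imp_one' (a : A) : H.imp a H.one = H.one := by
  have h := H.K a a
  rwa [H.one_eq a] at h

lemma mp' {a b : A} (ha : a = H.one) (hab : H.imp a b = H.one) : b = H.one := by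
  refine H.antisymm b H.one (H.imp_one' b) ?_
  rw [ha] at hab; exact hab

/-- composition at the level of `= 1` -/
lemma comp_one {a u v : A} (h1 : H.imp a u = H.one) (h2 : H.imp u v = H.one) :
    H.imp a v = H.one := by
  have h3 : H.imp a (H.imp u v) = H.one := H.mp' h2 (H.K (H.imp u v) a)
  exact H.mp' h1 (H.mp' h3 (H.S a u v))

/-- `⊢ a → ((a → b) → b)` -/
lemma imp_mp_self (a b : A) : H.imp a (H.imp (H.imp a b) b) = H.one := by
  have h2 : H.imp (H.imp (H.imp a b) a) (H.imp (H.imp a b) b) = H.one :=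
    H.mp' (H.one_eq (H.imp a b)) (H.S (H.imp a b) a b)
  exact H.comp_one (H.K a (H.imp a b)) h2

/-! ### Filter lemmas -/

lemma one_mem {F : Set A} (hF : H.IsFilter F) : H.one ∈ F := hF.1

lemma mp_mem {F : Set A} (hF : H.IsFilter F) {a b : A} (ha : a ∈ F)
    (hab : H.imp a b ∈ F) : b ∈ F := hF.2 a b ha hab

lemma imp_mem {F : Set A} (hF : H.IsFilter F) {b : A} (hb : b ∈ F) (a : A) :
    H.imp a b ∈ F := by
  refine hF.2 b (H.imp a b) hb ?_
  rw [H.K]; exact hF.1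

lemma comp_mem {F : Set A} (hF : H.IsFilter F) {a b c : A}
    (h1 : H.imp a b ∈ F) (h2 : H.imp b c ∈ F) : H.imp a c ∈ F := by
  have habc : H.imp a (H.imp b c) ∈ F := H.imp_mem hF h2 a
  have hs : H.imp (H.imp a b) (H.imp a c) ∈ F := by
    refine hF.2 _ _ habc ?_
    rw [H.S]; exact hF.1
  exact hF.2 _ _ h1 hs

lemma isFilter_Fg (X : Set A) : H.IsFilter (H.Fg X) := by
  constructor
  · intro G hG
    exact hG.1.1
  · intro a b ha hab G hG
    exact hG.1.2 a b (ha G hG) (hab G hG)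

lemma subset_Fg (X : Set A) : X ⊆ H.Fg X := by
  intro x hx G hG
  exact hG.2 hx

lemma Fg_subset {X G : Set A} (hG : H.IsFilter G) (hXG : X ⊆ G) : H.Fg X ⊆ G :=
  fun _ hb => hb G ⟨hG, hXG⟩

/-- Deduction theorem. -/
lemma mem_Fg_insert_iff {F : Set A} (hF : H.IsFilter F) (a b : A) :
    b ∈ H.Fg (insert a F) ↔ H.imp a b ∈ F := by
  constructor
  · intro hb
    have hD : H.IsFilter {c | H.imp a c ∈ F} := by
      constructor
      · show H.imp a H.one ∈ F
        rw [H.imp_one']; exact hF.1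
      · intro x y hx hxy
        have hs : H.imp (H.imp a x) (H.imp a y) ∈ F := by
          refine hF.2 _ _ hxy ?_
          rw [H.S]; exact hF.1
        exact hF.2 _ _ hx hs
    have hsub : insert a F ⊆ {c | H.imp a c ∈ F} := by
      intro c hc
      rcases hc with rfl | hc
      · show H.imp c c ∈ F
        rw [H.one_eq]; exact hF.1
      · exact H.imp_mem hF hc a
    exact H.Fg_subset hD hsub hb
  · intro h G hG
    exact hG.1.2 a b (hG.2 (Set.mem_insert a F)) (hG.2 (Set.mem_insert_of_mem a h))

lemma notMem_Fg_insert {F : Set A} (hF : H.IsFilter F) {a b : A}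
    (h : H.imp a b ∉ F) : b ∉ H.Fg (insert a F) := fun hb =>
  h ((H.mem_Fg_insert_iff hF a b).mp hb)

/-- Existence of a maximal filter containing `F` and avoiding `a`. -/
lemma exists_maximal_avoiding {F : Set A} (hF : H.IsFilter F) {a : A} (ha : a ∉ F) :
    ∃ M, H.IsFilter M ∧ F ⊆ M ∧ a ∉ M ∧
      ∀ G, H.IsFilter G → M ⊆ G → a ∉ G → G = M := by
  set S : Set (Set A) := {G | H.IsFilter G ∧ F ⊆ G ∧ a ∉ G} with hS
  have hzorn := zorn_subset_nonempty S ?_ F ⟨hF, subset_rfl, ha⟩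
  · obtain ⟨M, hFM, hMS, hMmax⟩ := hzorn
    exact ⟨M, hMS.1, hFM, hMS.2.2, fun G hG hMG haG =>
      Set.Subset.antisymm (hMmax ⟨hG, hMS.2.1.trans hMG, haG⟩ hMG) hMG⟩
  · intro c hcS hchain hcne
    refine ⟨⋃₀ c, ⟨⟨?_, ?_⟩, ?_, ?_⟩, fun s hs => Set.subset_sUnion_of_mem hs⟩
    · obtain ⟨G, hG⟩ := hcne
      exact Set.mem_sUnion_of_mem (hcS hG).1.1 hG
    · rintro x y hx hxy
      obtain ⟨G1, hG1, hxG1⟩ := hx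
      obtain ⟨G2, hG2, hxyG2⟩ := hxy
      rcases hchain.total hG1 hG2 with h | h
      · exact Set.mem_sUnion_of_mem ((hcS hG2).1.2 x y (h hxG1) hxyG2) hG2
      · exact Set.mem_sUnion_of_mem ((hcS hG1).1.2 x y hxG1 (h hxyG2)) hG1
    · obtain ⟨G, hG⟩ := hcne
      exact ((hcS hG).2.1).trans (Set.subset_sUnion_of_mem hG)
    · rintro ⟨G, hG, haG⟩
      exact (hcS hG).2.2 haG

/-- A maximal filter avoiding an element is meet irreducible. -/
lemma maximal_avoiding_meetIrred {M : Set A} {a : A} (hM : H.IsFilter M)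
    (haM : a ∉ M) (hmax : ∀ G, H.IsFilter G → M ⊆ G → a ∉ G → G = M) :
    H.MeetIrred M := by
  refine ⟨hM, ?_, ?_⟩
  · intro h
    exact haM (h ▸ Set.mem_univ a)
  · intro G K hG hK hMG hMK heq
    have haG : a ∈ G := by
      by_contra h
      exact hMG.ne (hmax G hG hMG.subset h).symm
    have haK : a ∈ K := by
      by_contra h
      exact hMK.ne (hmax K hK hMK.subset h).symm
    exact haM (heq ▸ Set.mem_inter haG haK)

/-- The 'weak join' characterization for meet irreducible filters. -/
lemma irred_pair {F : Set A} (hF : H.MeetIrred F) {a b : A} (ha : a ∉ F)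
    (hb : b ∉ F) : ∃ z, z ∉ F ∧ H.imp a z ∈ F ∧ H.imp b z ∈ F := by
  have hGf := H.isFilter_Fg (insert a F)
  have hKf := H.isFilter_Fg (insert b F)
  have hFG : F ⊂ H.Fg (insert a F) := by
    refine ⟨fun x hx => H.subset_Fg _ (Set.mem_insert_of_mem a hx), fun h => ?_⟩
    exact ha (h (H.subset_Fg _ (Set.mem_insert a F)))
  have hFK : F ⊂ H.Fg (insert b F) := by
    refine ⟨fun x hx => H.subset_Fg _ (Set.mem_insert_of_mem b hx), fun h => ?_⟩
    exact hb (h (H.subset_Fg _ (Set.mem_insert b F)))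
  have hne := hF.2.2 _ _ hGf hKf hFG hFK
  have hsub : F ⊆ H.Fg (insert a F) ∩ H.Fg (insert b F) :=
    Set.subset_inter hFG.subset hFK.subset
  obtain ⟨z, hz, hzF⟩ := Set.exists_of_ssubset ⟨hsub, fun h => hne (Set.Subset.antisymm hsub h)⟩
  exact ⟨z, hzF, (H.mem_Fg_insert_iff hF.1 a z).mp hz.1,
    (H.mem_Fg_insert_iff hF.1 b z).mp hz.2⟩

/-! ### Chain implies failure of the identity -/

lemma chain_to_witness : ∀ (n : ℕ) (F : Fin (n + 1) → Set A),
    (∀ i, H.MeetIrred (F i)) → (∀ i j : Fin (n + 1), i < j → F i ⊂ F j) →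
    ∃ x : Fin (n + 1) → A, H.d n x ∉ F 0 := by
  intro n
  induction n with
  | zero =>
    intro F hirr _
    obtain ⟨x₀, hx₀⟩ := Set.ne_univ_iff_exists_notMem _ |>.mp (hirr 0).2.1
    exact ⟨fun _ => x₀, hx₀⟩
  | succ n ih =>
    intro F hirr hchain
    obtain ⟨x, hx⟩ := ih (fun i => F i.succ) (fun i => hirr i.succ)
      (fun i j hij => hchain i.succ j.succ (Fin.succ_lt_succ_iff.mpr hij))
    -- hx : d n x ∉ F 1
    set t := H.d n x with ht
    have h01 : F 0 ⊂ F 1 := hchain 0 1 (by simp [Fin.lt_def])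
    have hx1 : t ∉ F 1 := by
      have : (Fin.succ 0 : Fin (n + 2)) = 1 := rfl
      rwa [this] at hx
    obtain ⟨c, hc1, hc0⟩ := Set.exists_of_ssubset h01
    have hct : H.imp c t ∉ F 0 := fun h =>
      hx1 ((hirr 1).1.2 c t hc1 (h01.subset h))
    obtain ⟨z, hz, hcz, hctz⟩ := H.irred_pair (hirr 0) hc0 hct
    obtain ⟨M, hMf, hFM, hzM, hmax⟩ := H.exists_maximal_avoiding (hirr 0).1 hz
    have hzt : H.imp z t ∉ M := by
      intro h
      have h1 : H.imp c t ∈ M := H.comp_mem hMf (hFM hcz) h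
      exact hzM (H.mp_mem hMf h1 (hFM hctz))
    have hu : H.imp (H.imp z t) z ∈ M := by
      rw [← H.mem_Fg_insert_iff hMf]
      by_contra hzG
      have heq := hmax _ (H.isFilter_Fg _)
        (fun w hw => H.subset_Fg _ (Set.mem_insert_of_mem _ hw)) hzG
      exact hzt (heq ▸ H.subset_Fg _ (Set.mem_insert _ _))
    refine ⟨Fin.snoc x z, fun hD => ?_⟩
    simp only [d, Fin.snoc_last, Fin.snoc_castSucc] at hD
    exact hzM (H.mp_mem hMf hu (hFM hD))

/-! ### Failure of the identity implies a chain -/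

lemma witness_to_chain : ∀ (n : ℕ) (M : Set A), H.MeetIrred M →
    ∀ x : Fin (n + 1) → A, H.d n x ∉ M →
    ∃ F : Fin (n + 1) → Set A, (∀ i, H.MeetIrred (F i)) ∧
      (∀ i j : Fin (n + 1), i < j → F i ⊂ F j) ∧ F 0 = M := by
  intro n
  induction n with
  | zero =>
    intro M hM x _
    exact ⟨fun _ => M, fun _ => hM, fun i j hij => absurd hij (by omega), rfl⟩
  | succ n ih =>
    intro M hM x hD
    set y := x (Fin.last (n + 1)) with hy
    set t := H.d n (fun i => x i.castSucc) with htdef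
    set u := H.imp (H.imp y t) y with hu
    have hD' : H.imp u y ∉ M := hD
    have hyM : y ∉ M := fun h => hD' (H.imp_mem hM.1 h u)
    have htM : t ∉ M := by
      intro h
      have h1 : H.imp y t ∈ M := H.imp_mem hM.1 h y
      have h2 : H.imp (H.imp y t) (H.imp u y) ∈ M := by
        rw [hu]
        have := H.imp_mp_self (H.imp y t) y
        rw [this]; exact hM.1.1
      exact hD' (H.mp_mem hM.1 h1 h2)
    have hN : ∃ N, H.MeetIrred N ∧ M ⊂ N ∧ t ∉ N := by
      by_cases huM : u ∈ M
      · obtain ⟨z, hz, hyz, htz⟩ := H.irred_pair hM hyM htM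
        have hzt : H.imp z t ∉ M := by
          intro h
          exact hyM (H.mp_mem hM.1 (H.comp_mem hM.1 hyz h) huM)
        have htFg : t ∉ H.Fg (insert z M) := H.notMem_Fg_insert hM.1 hzt
        obtain ⟨N, hNf, hsub, htN, hmax⟩ :=
          H.exists_maximal_avoiding (H.isFilter_Fg _) htFg
        have hMN : M ⊆ N := fun w hw =>
          hsub (H.subset_Fg _ (Set.mem_insert_of_mem _ hw))
        have hzN : z ∈ N := hsub (H.subset_Fg _ (Set.mem_insert _ _))
        exact ⟨N, H.maximal_avoiding_meetIrred hNf htN hmax,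
          ⟨hMN, fun h => hz (h hzN)⟩, htN⟩
      · have hyFg : y ∉ H.Fg (insert u M) := H.notMem_Fg_insert hM.1 hD'
        obtain ⟨N, hNf, hsub, hyN, hmax⟩ :=
          H.exists_maximal_avoiding (H.isFilter_Fg _) hyFg
        have hMN : M ⊆ N := fun w hw =>
          hsub (H.subset_Fg _ (Set.mem_insert_of_mem _ hw))
        have huN : u ∈ N := hsub (H.subset_Fg _ (Set.mem_insert _ _))
        have htN : t ∉ N := fun h =>
          hyN (H.mp_mem hNf (H.imp_mem hNf h y) huN)
        exact ⟨N, H.maximal_avoiding_meetIrred hNf hyN hmax,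
          ⟨hMN, fun h => huM (h huN)⟩, htN⟩
    obtain ⟨N, hNirr, hMN, htN⟩ := hN
    obtain ⟨G, hGirr, hGchain, hG0⟩ := ih N hNirr (fun i => x i.castSucc) htN
    refine ⟨Fin.cases M G, ?_, ?_, by simp⟩
    · intro i
      induction i using Fin.cases with
      | zero => exact hM
      | succ i => simpa using hGirr i
    · intro i j hij
      induction j using Fin.cases with
      | zero => exact absurd hij (by simp)
      | succ j =>
        induction i using Fin.cases with
        | zero =>
          simp only [Fin.cases_zero, Fin.cases_succ]
          rcases eq_or_lt_of_le (Fin.zero_le j) with h | h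
          · rw [← h, hG0]; exact hMN
          · exact hMN.trans (hG0 ▸ hGchain 0 j h)
        | succ i =>
          simp only [Fin.cases_succ]
          exact hGchain i j (by exact Fin.succ_lt_succ_iff.mp hij)

end HilbertAlgebra

/-- Main theorem: a Hilbert algebra has depth `≤ n` (no chain of `n + 1`
strictly increasing meet irreducible implicative filters) iff it satisfies the
identity `dₙ ≈ 1`. -/
theorem hilbert_depth_iff_identity {A : Type*} (H : HilbertAlgebra A) (n : ℕ) :
    (¬ ∃ F : Fin (n + 1) → Set A,
        (∀ i, H.MeetIrred (F i)) ∧ ∀ i j : Fin (n + 1), i < j → F i ⊂ F j) ↔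
      (∀ x : Fin (n + 1) → A, H.d n x = H.one) := by
  constructor
  · intro hnochain x
    by_contra hne
    have h1 : H.IsFilter {H.one} := by
      refine ⟨rfl, ?_⟩
      intro a b ha hab
      simp only [Set.mem_singleton_iff] at *
      exact H.mp' ha hab
    have hd1 : H.d n x ∉ ({H.one} : Set A) := by simpa using hne
    obtain ⟨M, hMf, _, haM, hmax⟩ := H.exists_maximal_avoiding h1 hd1
    have hirr := H.maximal_avoiding_meetIrred hMf haM hmax
    obtain ⟨F, hF1, hF2, _⟩ := H.witness_to_chain n M hirr x haM
    exact hnochain ⟨F, hF1, hF2⟩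
  · rintro hid ⟨F, hirr, hchain⟩
    obtain ⟨x, hx⟩ := H.chain_to_witness n F hirr hchain
    exact hx (hid x ▸ (hirr 0).1.1)
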